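/- arXiv:2305.13219 — 2 statements merged into one kernel-verified Lean document; each statement's English description precedes it below -/
import Mathlib

section
/- A bicomplex number λ is an eigenvalue of an n×n bicomplex matrix A (i.e., there exists v = v₁e + v₂e† ∈ 𝔹ℂⁿ with both idempotent components v₁, v₂ nonzero and Av = λv) if and only if det(A - λI) = 0. -/
noncomputable section

/-- Bicomplex numbers, modeled as `ℂ × ℂ` via the idempotent isomorphism
(componentwise operations). -/
abbrev BC : Type := ℂ × ℂ

/-- The imaginary unit `i` of `𝔹ℂ`. -/
def BC.i : BC := (Complex.I, Complex.I)

/-- The second imaginary unit `j` of `𝔹ℂ` (so `z = a + j b ↦ (a - i b, a + i b)`). -/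
def BC.j : BC := (-Complex.I, Complex.I)

/-- The idempotent `e = (1 + ij)/2`. -/
def BC.e : BC := (1 + BC.i * BC.j) / 2

/-- The idempotent `e† = (1 - ij)/2`. -/
def BC.ed : BC := (1 - BC.i * BC.j) / 2

/-- The embedding of `ℂ` into `𝔹ℂ` (a complex `z` has idempotent components `z, z`). -/
def toBC (z : ℂ) : BC := (z, z)

/-! Over `R × S` a linear system `M *ᵥ v = 0` splits into its two component systems, and
`det M` has the two component determinants as its coordinates. Over a domain a square system has
a nontrivial solution iff its determinant vanishes; gluing nontrivial solutions of both component
systems gives a solution with both components nonzero. -/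

namespace Matrix

variable {n : Type*} [Fintype n]

theorem mulVec_eq_smul_iff_sub_smul_one_mulVec_eq_zero [DecidableEq n] {R : Type*} [CommRing R]
    (A : Matrix n n R) (c : R) (v : n → R) :
    A *ᵥ v = c • v ↔ (A - c • (1 : Matrix n n R)) *ᵥ v = 0 := by
  rw [sub_mulVec, smul_mulVec, one_mulVec, sub_eq_zero]

variable {R S : Type*} [CommRing R] [CommRing S]

theorem prod_mulVec_eq_zero_iff (M : Matrix n n (R × S)) (v : n → R × S) :
    M *ᵥ v = 0 ↔
      M.map Prod.fst *ᵥ (Prod.fst ∘ v) = 0 ∧ M.map Prod.snd *ᵥ (Prod.snd ∘ v) = 0 := by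
  have h₁ i : ((M *ᵥ v) i).1 = (M.map Prod.fst *ᵥ (Prod.fst ∘ v)) i :=
    RingHom.map_mulVec (RingHom.fst R S) M v i
  have h₂ i : ((M *ᵥ v) i).2 = (M.map Prod.snd *ᵥ (Prod.snd ∘ v)) i :=
    RingHom.map_mulVec (RingHom.snd R S) M v i
  simp only [funext_iff, Prod.ext_iff, forall_and, Pi.zero_apply, Prod.fst_zero, Prod.snd_zero,
    h₁, h₂]

theorem prod_det_eq_zero_iff [DecidableEq n] (M : Matrix n n (R × S)) :
    M.det = 0 ↔ (M.map Prod.fst).det = 0 ∧ (M.map Prod.snd).det = 0 := by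
  have h₁ : M.det.1 = (M.map Prod.fst).det := RingHom.map_det (RingHom.fst R S) M
  have h₂ : M.det.2 = (M.map Prod.snd).det := RingHom.map_det (RingHom.snd R S) M
  rw [Prod.ext_iff, h₁, h₂, Prod.fst_zero, Prod.snd_zero]

theorem prod_exists_mulVec_eq_zero_iff [DecidableEq n] [IsDomain R] [IsDomain S]
    (M : Matrix n n (R × S)) :
    (∃ v : n → R × S, Prod.fst ∘ v ≠ 0 ∧ Prod.snd ∘ v ≠ 0 ∧ M *ᵥ v = 0) ↔ M.det = 0 := by
  rw [prod_det_eq_zero_iff, ← exists_mulVec_eq_zero_iff, ← exists_mulVec_eq_zero_iff]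
  constructor
  · rintro ⟨v, hv₁, hv₂, hv⟩
    rw [prod_mulVec_eq_zero_iff] at hv
    exact ⟨⟨_, hv₁, hv.1⟩, ⟨_, hv₂, hv.2⟩⟩
  · rintro ⟨⟨v₁, hv₁, h₁⟩, ⟨v₂, hv₂, h₂⟩⟩
    exact ⟨fun i => (v₁ i, v₂ i), hv₁, hv₂, (prod_mulVec_eq_zero_iff _ _).2 ⟨h₁, h₂⟩⟩

end Matrix

/-- `λ` is an eigenvalue of a bicomplex matrix `A` (there is `v` with both
idempotent components nonzero and `Av = λv`) iff `det(A - λI) = 0`. -/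
theorem bc_eigenvalue_iff {n : ℕ} (A : Matrix (Fin n) (Fin n) BC) (lam : BC) :
    (∃ v : Fin n → BC, (fun i => (v i).1) ≠ 0 ∧ (fun i => (v i).2) ≠ 0 ∧
      A.mulVec v = lam • v) ↔ (A - lam • (1 : Matrix (Fin n) (Fin n) BC)).det = 0 := by
  simp only [Matrix.mulVec_eq_smul_iff_sub_smul_one_mulVec_eq_zero]
  exact Matrix.prod_exists_mulVec_eq_zero_iff _
end
end

section
/- Spectral theorem for bicomplex self-adjoint matrices: every n×n bicomplex matrix A with A = A* (conjugate-transpose under bicomplex conjugation) can be written A = PDP⁻¹ where D is a diagonal bicomplex matrix (with hyperbolic, i.e., real-idempotent-component, diagonal entries) and P is a bicomplex unitary matrix (P* = P⁻¹). -/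
noncomputable section

/-- The bicomplex conjugate `z̄ = z̄₁e + z̄₂e†`. -/
def bconj (z : BC) : BC := (starRingEnd ℂ z.1, starRingEnd ℂ z.2)

/-- The bicomplex inner product `⟨z, w⟩ = Σᵢ zᵢ·w̄ᵢ` on `𝔹ℂⁿ`. -/
def binner {n : ℕ} (z w : Fin n → BC) : BC := ∑ i, z i * bconj (w i)

/-- The bicomplex adjoint (conjugate transpose) of a bicomplex matrix. -/
def badj {n : ℕ} (A : Matrix (Fin n) (Fin n) BC) : Matrix (Fin n) (Fin n) BC :=
  Matrix.of fun r c => bconj (A c r)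

/-- Combine two complex matrices into a bicomplex matrix, entrywise. -/
def zipM {n : ℕ} (A B : Matrix (Fin n) (Fin n) ℂ) : Matrix (Fin n) (Fin n) BC :=
  Matrix.of fun r c => (A r c, B r c)

lemma zipM_mul {n : ℕ} (A B C D : Matrix (Fin n) (Fin n) ℂ) :
    zipM A B * zipM C D = zipM (A * C) (B * D) := by
  ext r c
  · simp [zipM, Matrix.mul_apply, Prod.fst_sum]
  · simp [zipM, Matrix.mul_apply, Prod.snd_sum]

lemma zipM_one {n : ℕ} : zipM (n := n) 1 1 = 1 := by
  ext r c <;> simp only [zipM, Matrix.of_apply, Matrix.one_apply] <;> split <;> rfl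

lemma badj_zipM {n : ℕ} (A B : Matrix (Fin n) (Fin n) ℂ) :
    badj (zipM A B) = zipM (Matrix.conjTranspose A) (Matrix.conjTranspose B) := by
  ext r c <;> rfl

/-- Spectral theorem for bicomplex self-adjoint matrices: if `A = A*` then
`A = PDP⁻¹` with `D` diagonal with hyperbolic entries and `P` unitary (`P* = P⁻¹`). -/
theorem bc_spectral_theorem {n : ℕ} (A : Matrix (Fin n) (Fin n) BC) (hA : badj A = A) :
    ∃ P D : Matrix (Fin n) (Fin n) BC,
      (∀ r c, r ≠ c → D r c = 0) ∧
      (∀ r, ∃ a b : ℝ, D r r = ((a : ℂ), (b : ℂ))) ∧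
      IsUnit P ∧ badj P = P⁻¹ ∧ A = P * D * P⁻¹ := by
  set A₁ : Matrix (Fin n) (Fin n) ℂ := Matrix.of fun r c => (A r c).1 with hA₁def
  set A₂ : Matrix (Fin n) (Fin n) ℂ := Matrix.of fun r c => (A r c).2 with hA₂def
  have hAzip : A = zipM A₁ A₂ := by ext r c <;> rfl
  have h1 : A₁.IsHermitian := by
    ext r c
    have := congrFun (congrFun hA r) c
    exact congrArg Prod.fst this
  have h2 : A₂.IsHermitian := by
    ext r c
    have := congrFun (congrFun hA r) c
    exact congrArg Prod.snd this
  set U₁ : Matrix (Fin n) (Fin n) ℂ := (h1.eigenvectorUnitary : Matrix (Fin n) (Fin n) ℂ)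
  set U₂ : Matrix (Fin n) (Fin n) ℂ := (h2.eigenvectorUnitary : Matrix (Fin n) (Fin n) ℂ)
  set D₁ : Matrix (Fin n) (Fin n) ℂ := Matrix.diagonal (RCLike.ofReal ∘ h1.eigenvalues)
  set D₂ : Matrix (Fin n) (Fin n) ℂ := Matrix.diagonal (RCLike.ofReal ∘ h2.eigenvalues)
  have hmul : zipM U₁ U₂ * zipM (star U₁) (star U₂) = 1 := by
    rw [zipM_mul]
    rw [(Matrix.mem_unitaryGroup_iff).mp h1.eigenvectorUnitary.2,
      (Matrix.mem_unitaryGroup_iff).mp h2.eigenvectorUnitary.2, zipM_one]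
  have hmul' : zipM (star U₁) (star U₂) * zipM U₁ U₂ = 1 := by
    rw [zipM_mul]
    rw [(Matrix.mem_unitaryGroup_iff').mp h1.eigenvectorUnitary.2,
      (Matrix.mem_unitaryGroup_iff').mp h2.eigenvectorUnitary.2, zipM_one]
  have hinv : (zipM U₁ U₂)⁻¹ = zipM (star U₁) (star U₂) :=
    Matrix.inv_eq_right_inv hmul
  refine ⟨zipM U₁ U₂, zipM D₁ D₂, ?_, ?_, ?_, ?_, ?_⟩
  · intro r c hrc
    have e1 : D₁ r c = 0 := Matrix.diagonal_apply_ne _ hrc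
    have e2 : D₂ r c = 0 := Matrix.diagonal_apply_ne _ hrc
    simp [zipM, e1, e2]
  · intro r
    exact ⟨h1.eigenvalues r, h2.eigenvalues r, by
      simp [zipM, D₁, D₂, Matrix.diagonal_apply_eq]⟩
  · exact ⟨⟨_, _, hmul, hmul'⟩, rfl⟩
  · rw [hinv, badj_zipM]; rfl
  · rw [hinv, zipM_mul, zipM_mul, ← Unitary.conjStarAlgAut_apply (S := ℂ), ← Unitary.conjStarAlgAut_apply (S := ℂ),
      ← h1.spectral_theorem, ← h2.spectral_theorem]
    exact hAzip
end
end
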